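/- Let S : [0,1] → ℝ be continuous with S(x) > 0 for all x, and let τ > 0. If λ > 0 satisfies λ·S(1) < 1, then there exists x ∈ [0,1] with S(x) = R(x, τ, λ), where R(x, τ, λ) = τ·log(1 − (1 − e^{1/(λτ)})·x). -/

import Mathlib

open Real Set

theorem stmt_5 (τ lam : ℝ) (S : ℝ → ℝ) (hτ : 0 < τ) (hlam : 0 < lam)
    (hS : ContinuousOn S (Set.Icc 0 1))
    (hSpos : ∀ x ∈ Set.Icc (0:ℝ) 1, 0 < S x)
    (hrate : lam * S 1 < 1) :
    ∃ x ∈ Set.Icc (0:ℝ) 1,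
      S x = τ * Real.log (1 - (1 - Real.exp (1 / (lam * τ))) * x) := by
  set c : ℝ := Real.exp (1 / (lam * τ)) with hc
  have hc1 : 1 < c := by
    rw [hc]
    exact Real.one_lt_exp_iff.mpr (by positivity)
  set R : ℝ → ℝ := fun x => τ * Real.log (1 - (1 - c) * x) with hR
  have harg : ∀ x ∈ Set.Icc (0:ℝ) 1, 0 < 1 - (1 - c) * x := by
    intro x hx
    have hx0 := hx.1
    have : (1 - c) * x ≤ 0 := mul_nonpos_of_nonpos_of_nonneg (by linarith) hx0
    linarith
  have hRcont : ContinuousOn R (Set.Icc 0 1) := by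
    apply ContinuousOn.mul continuousOn_const
    apply ContinuousOn.log
    · fun_prop
    · intro x hx; exact ne_of_gt (harg x hx)
  set g : ℝ → ℝ := fun x => S x - R x with hg
  have hgcont : ContinuousOn g (Set.Icc 0 1) := hS.sub hRcont
  have hg0 : 0 < g 0 := by
    have := hSpos 0 (by constructor <;> norm_num)
    simp [hg, hR, this]
  have hg1 : g 1 < 0 := by
    have hR1 : R 1 = 1 / lam := by
      simp only [hR, hc]
      rw [mul_one, sub_sub_cancel, Real.log_exp]
      field_simp
    have hS1 : S 1 < 1 / lam := by
      rw [lt_div_iff₀ hlam]; linarith [hrate]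
    simp only [hg]; rw [hR1]; linarith
  have := intermediate_value_Icc' (by norm_num : (0:ℝ) ≤ 1) hgcont
    (show (0:ℝ) ∈ Set.Icc (g 1) (g 0) from ⟨le_of_lt hg1, le_of_lt hg0⟩)
  obtain ⟨x, hx, hgx⟩ := this
  exact ⟨x, hx, by simpa [hg, sub_eq_zero] using hgx⟩
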